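/- arXiv:1309.7493 — 4 statements merged into one kernel-verified Lean document; each statement's English description precedes it below -/
import Mathlib

section
/- A ring R with identity is quasipolar (for each a there is an idempotent p ∈ comm²(a) with a + p a unit and ap quasinilpotent) if and only if for every a ∈ R there is an idempotent p ∈ comm²(a) with a + p ∈ Q(R) and a - ap ∈ QN(R). -/
variable {R : Type*} [Ring R]

def qnil (a : R) : Prop := ∀ x : R, a * x = x * a → IsUnit (1 + a * x)

def inComm2 (a x : R) : Prop := ∀ y : R, y * a = a * y → x * y = y * x

def IsQuasipolarElem (a : R) : Prop :=
  ∃ p : R, p * p = p ∧ inComm2 a p ∧ IsUnit (a + p) ∧ qnil (a * p)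

def inQ (a : R) : Prop := ∃ p : R, p + a - p * a = 0 ∧ a + p - a * p = 0

def inQN (a : R) : Prop := ∀ x : R, a * x = x * a → inQ (a * x)

/-- membership in the Jacobson radical -/
def memJ (a : R) : Prop := ∀ x y : R, IsUnit (1 - x * a * y)

def IsStrReg (a : R) : Prop := ∃ b : R, a * b = b * a ∧ a = a * b * a

lemma inQ_iff_isUnit (b : R) : inQ b ↔ IsUnit (1 - b) := by
  constructor
  · rintro ⟨c, h1, h2⟩
    refine isUnit_iff_exists.mpr ⟨1 - c, ?_, ?_⟩
    · have h : (1 - b) * (1 - c) = 1 - (b + c - b * c) := by noncomm_ring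
      rw [h, h2, sub_zero]
    · have h : (1 - c) * (1 - b) = 1 - (c + b - c * b) := by noncomm_ring
      rw [h, h1, sub_zero]
  · rintro ⟨u, hu⟩
    refine ⟨1 - ↑u⁻¹, ?_, ?_⟩
    · have h : ((↑u⁻¹ : R)) * (1 - b) = 1 := by rw [← hu]; exact u.inv_mul
      have h2 : ((↑u⁻¹ : R)) * (1 - b) = 1 - ((1 - ↑u⁻¹) + b - (1 - ↑u⁻¹) * b) := by
        noncomm_ring
      rw [h2] at h
      exact sub_eq_self.mp h
    · have h : (1 - b) * ((↑u⁻¹ : R)) = 1 := by rw [← hu]; exact u.mul_inv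
      have h2 : (1 - b) * ((↑u⁻¹ : R)) = 1 - (b + (1 - ↑u⁻¹) - b * (1 - ↑u⁻¹)) := by
        noncomm_ring
      rw [h2] at h
      exact sub_eq_self.mp h

theorem stmt4 :
    (∀ a : R, IsQuasipolarElem a) ↔
      ∀ a : R, ∃ p : R, p * p = p ∧ inComm2 a p ∧ inQ (a + p) ∧ inQN (a - a * p) := by
  constructor
  · intro h a
    obtain ⟨p, hp, hcomm, hu, hq⟩ := h (-a)
    refine ⟨1 - p, ?_, ?_, ?_, ?_⟩
    · rw [sub_mul, one_mul, mul_sub, mul_one, hp]; abel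
    · intro y hy
      have hpy := hcomm y (by rw [neg_mul, mul_neg, hy])
      rw [sub_mul, one_mul, mul_sub, mul_one, hpy]
    · rw [inQ_iff_isUnit]
      have e : (1 : R) - (a + (1 - p)) = -a + p := by abel
      rw [e]; exact hu
    · intro x hx
      rw [inQ_iff_isUnit]
      have he : a - a * (1 - p) = a * p := by noncomm_ring
      rw [he] at hx ⊢
      have hc : (-a) * p * x = x * ((-a) * p) := by
        rw [neg_mul, neg_mul, hx, mul_neg]
      have := hq x hc
      have e2 : (1 : R) + (-a) * p * x = 1 - a * p * x := by noncomm_ring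
      rwa [e2] at this
  · intro h a
    obtain ⟨p, hp, hcomm, hQ, hQN⟩ := h (-a)
    refine ⟨1 - p, ?_, ?_, ?_, ?_⟩
    · rw [sub_mul, one_mul, mul_sub, mul_one, hp]; abel
    · intro y hy
      have hpy := hcomm y (by rw [neg_mul, mul_neg, hy])
      rw [sub_mul, one_mul, mul_sub, mul_one, hpy]
    · rw [inQ_iff_isUnit] at hQ
      have e : (1 : R) - (-a + p) = a + (1 - p) := by abel
      rwa [e] at hQ
    · intro x hx
      have hb : (-a) - (-a) * p = -(a * (1 - p)) := by noncomm_ring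
      have hc : ((-a) - (-a) * p) * x = x * ((-a) - (-a) * p) := by
        rw [hb, neg_mul, hx, mul_neg]
      have := hQN x hc
      rw [hb, inQ_iff_isUnit] at this
      have e2 : (1 : R) - -(a * (1 - p)) * x = 1 + a * (1 - p) * x := by noncomm_ring
      rwa [e2] at this
end

section
/- Let R be a ring with identity. An element a ∈ R is quasipolar if and only if a = s + q where s is strongly regular, s ∈ comm²(a), q is quasinilpotent (q ∈ R^{qnil}), and sq = qs = 0. -/
variable {R : Type*} [Ring R]

theorem stmt13 (a : R) :
    IsQuasipolarElem a ↔
      ∃ s q : R, IsStrReg s ∧ inComm2 a s ∧ qnil q ∧ a = s + q ∧ s * q = 0 ∧ q * s = 0 := by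
  constructor
  · rintro ⟨p, hpp, hp2, hU, hqn⟩
    have hpa : p * a = a * p := hp2 a rfl
    obtain ⟨u, hu⟩ := hU
    have hpa' : ∀ x : R, p * (a * x) = a * (p * x) := fun x => by
      rw [← mul_assoc, hpa, mul_assoc]
    have hpp' : ∀ x : R, p * (p * x) = p * x := fun x => by
      rw [← mul_assoc, hpp]
    have hsp : (a - a * p) * p = 0 := by rw [sub_mul, mul_assoc, hpp, sub_self]
    have hps : p * (a - a * p) = 0 := by
      rw [mul_sub, hpa, ← mul_assoc, hpa, mul_assoc, hpp, sub_self]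
    have hsu : (a - a * p) * (a + p) = (a + p) * (a - a * p) := by
      simp only [sub_mul, mul_sub, add_mul, mul_add, mul_assoc, hpa, hpp, hpa', hpp']
      abel
    have hss : (a - a * p) * (a - a * p) = ↑u * (a - a * p) := by
      rw [hu]
      simp only [sub_mul, mul_sub, add_mul, mul_add, mul_assoc, hpa, hpp, hpa', hpp']
      abel
    have hcu : Commute (a - a * p) (↑u : R) := by rw [hu]; exact hsu
    have hsv : (a - a * p) * ↑u⁻¹ = ↑u⁻¹ * (a - a * p) := hcu.units_inv_right
    have hb1 : (a - a * p) * (↑u⁻¹ * (1 - p)) = ↑u⁻¹ * (a - a * p) := by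
      rw [← mul_assoc, hsv, mul_assoc, mul_sub, mul_one, hsp, sub_zero]
    have hb2 : (↑u⁻¹ * (1 - p)) * (a - a * p) = ↑u⁻¹ * (a - a * p) := by
      rw [mul_assoc, sub_mul, one_mul, hps, sub_zero]
    have hbsbs : (a - a * p) * (↑u⁻¹ * (1 - p)) * (a - a * p) = a - a * p := by
      rw [hb1, mul_assoc, hss, ← mul_assoc, Units.inv_mul, one_mul]
    have h5 : p * (a * p) = a * p := by rw [← mul_assoc, hpa, mul_assoc, hpp]
    have h4 : (a * p) * (a * p) = a * (a * p) := by rw [mul_assoc, h5]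
    refine ⟨a - a * p, a * p, ⟨↑u⁻¹ * (1 - p), hb1.trans hb2.symm, hbsbs.symm⟩,
      ?_, hqn, by abel, ?_, ?_⟩
    · intro y hy
      have hpy : p * y = y * p := hp2 y hy
      have hkey : a * p * y = y * (a * p) := by
        rw [mul_assoc, hpy, ← mul_assoc, ← hy, mul_assoc]
      rw [sub_mul, mul_sub, hy, hkey]
    · rw [sub_mul, h4, sub_self]
    · rw [mul_sub, h4, mul_assoc, hpa, sub_self]
  · rintro ⟨s, q, ⟨b, hbc, hsbs⟩, hs2, hq, haeq, hsq, hqs⟩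
    obtain ⟨e, he⟩ : ∃ e : R, e = s * b := ⟨s * b, rfl⟩
    have hbc' : e = b * s := by rw [he, hbc]
    have hes : e * s = s := by rw [he, ← hsbs]
    have hse : s * e = s := by rw [hbc', ← mul_assoc, ← he, hes]
    have hee : e * e = e := by nth_rewrite 2 [he]; rw [← mul_assoc, hes, ← he]
    have heq : e * q = 0 := by rw [hbc', mul_assoc, hsq, mul_zero]
    have hqe : q * e = 0 := by rw [he, ← mul_assoc, hqs, zero_mul]
    have heb : e * b = b * e := by nth_rewrite 1 [hbc']; rw [mul_assoc, ← he]
    have hst : s * (b * e) = e := by rw [← mul_assoc, ← he, hee]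
    have hts : (b * e) * s = e := by rw [mul_assoc, hes, ← hbc']
    have het : e * (b * e) = b * e := by rw [← mul_assoc, heb, mul_assoc, hee]
    have hte : (b * e) * e = b * e := by rw [mul_assoc, hee]
    have hu1 : (s + 1 - e) * (b * e + 1 - e) = 1 := by
      simp only [sub_mul, mul_sub, add_mul, mul_add, mul_one, one_mul, hst, hse, het, hee]
      abel
    have hu2 : (b * e + 1 - e) * (s + 1 - e) = 1 := by
      simp only [sub_mul, mul_sub, add_mul, mul_add, mul_one, one_mul, hts, hte, hes, hee]
      abel
    have huu : IsUnit (s + 1 - e) := ⟨⟨s + 1 - e, b * e + 1 - e, hu1, hu2⟩, rfl⟩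
    have h1q : IsUnit (1 + q) := by
      have := hq 1 (by rw [mul_one, one_mul])
      rwa [mul_one] at this
    have hprod : (s + 1 - e) * (1 + q) = a + (1 - e) := by
      rw [haeq]
      simp only [mul_add, add_mul, sub_mul, mul_one, one_mul, hsq, heq]
      abel
    have hUnit : IsUnit (a + (1 - e)) := by rw [← hprod]; exact huu.mul h1q
    have hs0 : s * (1 - e) = 0 := by rw [mul_sub, mul_one, hse, sub_self]
    have h0s : (1 - e) * s = 0 := by rw [sub_mul, one_mul, hes, sub_self]
    have hap : a * (1 - e) = q := by
      rw [haeq, add_mul, hs0, zero_add, mul_sub, mul_one, hqe, sub_zero]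
    refine ⟨1 - e, ?_, ?_, hUnit, ?_⟩
    · simp only [sub_mul, mul_sub, one_mul, mul_one, hee]
      abel
    · intro y hy
      have hsy : s * y = y * s := hs2 y hy
      have hey : e * y = b * (s * y) := by rw [hbc', mul_assoc]
      have hye : y * e = y * s * b := by rw [he, ← mul_assoc]
      have h1 : (e * y) * (1 - e) = 0 := by
        rw [hey, mul_assoc, hsy, mul_assoc, hs0, mul_zero, mul_zero]
      have h2 : (1 - e) * (y * e) = 0 := by
        rw [hye, ← mul_assoc, ← hsy, ← mul_assoc, h0s, zero_mul, zero_mul]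
      rw [mul_sub, mul_one] at h1
      rw [sub_mul, one_mul] at h2
      have hey' : e * y = y * e :=
        (sub_eq_zero.mp h1).trans ((mul_assoc e y e).trans (sub_eq_zero.mp h2).symm)
      rw [sub_mul, mul_sub, one_mul, mul_one, hey']
    · rw [hap]; exact hq
end

section
/- Let R be a ring with identity. If R is quasipolar and R^{qnil} ⊆ J(R), then R is semiregular. Conversely, if R is abelian (all idempotents central) and semiregular, then R is quasipolar and R^{qnil} ⊆ J(R). -/
variable {R : Type*} [Ring R]

lemma unit_add_memJ {u j : R} (hu : IsUnit u) (hj : memJ j) : IsUnit (u + j) := by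
  obtain ⟨U, rfl⟩ := hu
  have h := hj (-(↑U⁻¹ : R)) 1
  have h2 : (1 : R) - (-(↑U⁻¹ : R)) * j * 1 = 1 + (↑U⁻¹ : R) * j := by noncomm_ring
  rw [h2] at h
  have h3 : (↑U : R) + j = ↑U * (1 + (↑U⁻¹ : R) * j) := by
    rw [mul_add, mul_one, ← mul_assoc, U.mul_inv, one_mul]
  rw [h3]
  exact (Units.isUnit U).mul h

theorem stmt16 :
    ((∀ a : R, IsQuasipolarElem a) ∧ (∀ a : R, qnil a → memJ a) →
      ∀ a : R, ∃ b : R, b * a * b = b ∧ memJ (a - a * b * a)) ∧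
    ((∀ e : R, e * e = e → ∀ x : R, e * x = x * e) →
      (∀ a : R, ∃ b : R, b * a * b = b ∧ memJ (a - a * b * a)) →
      (∀ a : R, IsQuasipolarElem a) ∧ (∀ a : R, qnil a → memJ a)) := by
  constructor
  · rintro ⟨hqp, hqJ⟩ a
    obtain ⟨p, hp2, hpc, hu, hq⟩ := hqp a
    have hpa : p * a = a * p := hpc a rfl
    obtain ⟨U, hU⟩ := hu
    have hUv : (a + p) * (↑U⁻¹ : R) = 1 := by rw [← hU]; exact U.mul_inv
    have hcp : Commute p (↑U : R) := by
      rw [hU]; show p * (a + p) = (a + p) * p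
      rw [mul_add, add_mul, hpa]
    have hpv : p * (↑U⁻¹ : R) = (↑U⁻¹ : R) * p := hcp.units_inv_right
    have hca : Commute a (↑U : R) := by
      rw [hU]; show a * (a + p) = (a + p) * a
      rw [mul_add, add_mul, hpa]
    have hav : a * (↑U⁻¹ : R) = (↑U⁻¹ : R) * a := hca.units_inv_right
    have hp0 : p * (1 - p) = 0 := by rw [mul_sub, mul_one, hp2, sub_self]
    have h1p : a * (1 - p) = (a + p) * (1 - p) := by rw [add_mul, hp0, add_zero]
    have hvp : (1 - p) * (↑U⁻¹ : R) = (↑U⁻¹ : R) * (1 - p) := by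
      rw [sub_mul, one_mul, hpv, mul_sub, mul_one]
    have hp0' : (1 - p) * p = 0 := by rw [sub_mul, one_mul, hp2, sub_self]
    have h1p2 : (1 - p) * (1 - p) = 1 - p := by
      rw [mul_sub, mul_one, hp0', sub_zero]
    have hab2 : a * ((1 - p) * (↑U⁻¹ : R)) = 1 - p := by
      calc a * ((1 - p) * (↑U⁻¹ : R)) = (a * (1 - p)) * (↑U⁻¹ : R) := (mul_assoc _ _ _).symm
        _ = ((a + p) * (1 - p)) * (↑U⁻¹ : R) := by rw [h1p]
        _ = (a + p) * ((1 - p) * (↑U⁻¹ : R)) := mul_assoc _ _ _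
        _ = (a + p) * ((↑U⁻¹ : R) * (1 - p)) := by rw [hvp]
        _ = ((a + p) * (↑U⁻¹ : R)) * (1 - p) := (mul_assoc _ _ _).symm
        _ = 1 - p := by rw [hUv, one_mul]
    have hpa' : (1 - p) * a = a * (1 - p) := by
      rw [sub_mul, one_mul, hpa, mul_sub, mul_one]
    have hba : ((1 - p) * (↑U⁻¹ : R)) * a = 1 - p := by
      calc ((1 - p) * (↑U⁻¹ : R)) * a = (1 - p) * ((↑U⁻¹ : R) * a) := mul_assoc _ _ _
        _ = (1 - p) * (a * (↑U⁻¹ : R)) := by rw [hav]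
        _ = ((1 - p) * a) * (↑U⁻¹ : R) := (mul_assoc _ _ _).symm
        _ = (a * (1 - p)) * (↑U⁻¹ : R) := by rw [hpa']
        _ = a * ((1 - p) * (↑U⁻¹ : R)) := mul_assoc _ _ _
        _ = 1 - p := hab2
    refine ⟨(1 - p) * (↑U⁻¹ : R), ?_, ?_⟩
    · rw [hba, ← mul_assoc, h1p2]
    · have h3 : a - a * ((1 - p) * (↑U⁻¹ : R)) * a = a * p := by
        rw [hab2, sub_mul, one_mul, sub_sub_cancel, hpa]
      rw [h3]
      exact hqJ (a * p) hq
  · intro hab hsr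
    constructor
    · intro a
      obtain ⟨b, hb, hj⟩ := hsr a
      have hf : (b * a) * (b * a) = b * a := by rw [← mul_assoc, hb]
      have he : (a * b) * (a * b) = a * b := by rw [mul_assoc, ← mul_assoc b a b, hb]
      have hfc := hab (b * a) hf
      have hec := hab (a * b) he
      have hef : (a * b) * (b * a) = b * a := by
        calc (a * b) * (b * a) = ((a * b) * b) * a := (mul_assoc _ _ _).symm
          _ = (b * (a * b)) * a := by rw [hec b]
          _ = (b * a * b) * a := by rw [← mul_assoc]
          _ = b * a := by rw [hb]
      have hf0 : (b * a) * (1 - b * a) = 0 := by rw [mul_sub, mul_one, hf, sub_self]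
      have h0f : (1 - b * a) * (b * a) = 0 := by rw [sub_mul, one_mul, hf, sub_self]
      have hp2 : (1 - b * a) * (1 - b * a) = 1 - b * a := by
        rw [mul_sub, mul_one, h0f, sub_zero]
      refine ⟨1 - b * a, hp2, ?_, ?_, ?_⟩
      · intro y _
        rw [sub_mul, one_mul, mul_sub, mul_one, hfc y]
      · -- IsUnit (a + (1 - b*a))
        have P1 : (a * (b * a)) * (b * (b * a)) = b * a := by
          calc (a * (b * a)) * (b * (b * a))
              = a * (((b * a) * b) * (b * a)) := by noncomm_ring
            _ = a * ((b * (b * a)) * (b * a)) := by rw [hfc b]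
            _ = (a * b) * ((b * a) * (b * a)) := by noncomm_ring
            _ = (a * b) * (b * a) := by rw [hf]
            _ = b * a := hef
        have P2 : (a * (b * a)) * (1 - b * a) = 0 := by
          rw [mul_assoc, hf0, mul_zero]
        have P3 : (1 - b * a) * (b * (b * a)) = 0 := by
          have hcb : (1 - b * a) * b = b * (1 - b * a) := by
            rw [sub_mul, one_mul, hfc b, mul_sub, mul_one]
          rw [← mul_assoc, hcb, mul_assoc, h0f, mul_zero]
        have Q1 : (b * (b * a)) * (a * (b * a)) = b * a := by
          calc (b * (b * a)) * (a * (b * a))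
              = b * (((b * a) * a) * (b * a)) := by noncomm_ring
            _ = b * ((a * (b * a)) * (b * a)) := by rw [hfc a]
            _ = (b * a) * ((b * a) * (b * a)) := by noncomm_ring
            _ = b * a := by rw [hf, hf]
        have Q2 : (b * (b * a)) * (1 - b * a) = 0 := by
          rw [mul_assoc, hf0, mul_zero]
        have Q3 : (1 - b * a) * (a * (b * a)) = 0 := by
          have hca : (1 - b * a) * a = a * (1 - b * a) := by
            rw [sub_mul, one_mul, hfc a, mul_sub, mul_one]
          rw [← mul_assoc, hca, mul_assoc, h0f, mul_zero]
        have hmul1 : (a * (b * a) + (1 - b * a)) * (b * (b * a) + (1 - b * a)) = 1 := by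
          have expand : (a * (b * a) + (1 - b * a)) * (b * (b * a) + (1 - b * a))
              = (a * (b * a)) * (b * (b * a)) + (a * (b * a)) * (1 - b * a)
                + (1 - b * a) * (b * (b * a)) + (1 - b * a) * (1 - b * a) := by
            noncomm_ring
          rw [expand, P1, P2, P3, hp2]
          abel
        have hmul2 : (b * (b * a) + (1 - b * a)) * (a * (b * a) + (1 - b * a)) = 1 := by
          have expand : (b * (b * a) + (1 - b * a)) * (a * (b * a) + (1 - b * a))
              = (b * (b * a)) * (a * (b * a)) + (b * (b * a)) * (1 - b * a)
                + (1 - b * a) * (a * (b * a)) + (1 - b * a) * (1 - b * a) := by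
            noncomm_ring
          rw [expand, Q1, Q2, Q3, hp2]
          abel
        have hu0 : IsUnit (a * (b * a) + (1 - b * a)) :=
          ⟨⟨_, _, hmul1, hmul2⟩, rfl⟩
        have hsum : a + (1 - b * a) = (a * (b * a) + (1 - b * a)) + (a - a * b * a) := by
          noncomm_ring
        rw [hsum]
        exact unit_add_memJ hu0 hj
      · -- qnil (a * (1 - b*a))
        intro x hx
        have hap : a * (1 - b * a) = a - a * b * a := by
          rw [mul_sub, mul_one, ← mul_assoc]
        have h := hj 1 (-x)
        have h2 : (1 : R) - 1 * (a - a * b * a) * (-x) = 1 + (a - a * b * a) * x := by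
          noncomm_ring
        rw [h2] at h
        rw [hap]
        exact h
    · intro a ha
      obtain ⟨b, hb, hj⟩ := hsr a
      have hf : (b * a) * (b * a) = b * a := by rw [← mul_assoc, hb]
      have he : (a * b) * (a * b) = a * b := by rw [mul_assoc, ← mul_assoc b a b, hb]
      have hfc := hab (b * a) hf
      have hec := hab (a * b) he
      have hef : (a * b) * (b * a) = b * a := by
        calc (a * b) * (b * a) = ((a * b) * b) * a := (mul_assoc _ _ _).symm
          _ = (b * (a * b)) * a := by rw [hec b]
          _ = (b * a * b) * a := by rw [← mul_assoc]
          _ = b * a := by rw [hb]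
      have hax : a * (b * (b * a)) = b * a := by
        rw [← mul_assoc, hef]
      have hxa : (b * (b * a)) * a = b * a := by
        calc (b * (b * a)) * a = b * ((b * a) * a) := by noncomm_ring
          _ = b * (a * (b * a)) := by rw [hfc a]
          _ = (b * a) * (b * a) := by noncomm_ring
          _ = b * a := hf
      have hcomm : a * (-(b * (b * a))) = (-(b * (b * a))) * a := by
        rw [mul_neg, neg_mul, hax, hxa]
      have hu := ha _ hcomm
      rw [mul_neg, hax] at hu
      have hu' : IsUnit (1 - b * a) := by
        have : (1 : R) + -(b * a) = 1 - b * a := by abel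
        rwa [this] at hu
      have h0f : (1 - b * a) * (b * a) = 0 := by rw [sub_mul, one_mul, hf, sub_self]
      have hp2 : (1 - b * a) * (1 - b * a) = (1 - b * a) * 1 := by
        rw [mul_one, mul_sub, mul_one, h0f, sub_zero]
      have h1 : (1 : R) - b * a = 1 := hu'.mul_left_cancel hp2
      have hf0 : b * a = 0 := by
        have := sub_eq_self.mp h1
        exact this
      have : a - a * b * a = a := by
        rw [mul_assoc, hf0, mul_zero, sub_zero]
      rw [← this]
      exact hj
end

section
/- Let R be a ring with identity. An element a ∈ R is pseudopolar if and only if a = s + q where s is strongly regular, s ∈ comm²(a), q^k ∈ J(R) for some k ∈ ℕ, and sq = qs = 0. -/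
variable {R : Type*} [Ring R]

lemma memJ_mul_left {a : R} (h : memJ a) (c : R) : memJ (c * a) := by
  intro x y
  have := h (x * c) y
  simpa [mul_assoc] using this

lemma isUnit_of_commute_mul {a b : R} (h : Commute a b) (hu : IsUnit (a * b)) :
    IsUnit a := by
  obtain ⟨u, hu_eq⟩ := hu
  have hcomm : Commute a ↑u := by
    rw [hu_eq]; exact (Commute.refl a).mul_right h
  have hinv : Commute a (↑u⁻¹ : R) := hcomm.units_inv_right
  refine isUnit_iff_exists.mpr ⟨b * ↑u⁻¹, ?_, ?_⟩
  · rw [← mul_assoc, ← hu_eq, u.mul_inv]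
  · calc b * ↑u⁻¹ * a = b * (a * ↑u⁻¹) := by rw [mul_assoc, ← hinv.eq]
      _ = (a * b) * ↑u⁻¹ := by rw [← mul_assoc, ← h.eq]
      _ = 1 := by rw [← hu_eq, u.mul_inv]

lemma isUnit_one_sub_of_memJ_pow {w : R} {k : ℕ} (hk : 0 < k) (h : memJ (w ^ k)) :
    IsUnit (1 - w) := by
  set S := ∑ i ∈ Finset.range k, w ^ i with hS
  have h1 : S * (w - 1) = w ^ k - 1 := geom_sum_mul w k
  have hcS : w * S = S * w := by
    rw [hS, Finset.mul_sum, Finset.sum_mul]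
    exact Finset.sum_congr rfl fun i _ => by rw [← pow_succ, ← pow_succ']
  have h2 : (1 - w) * S = 1 - w ^ k := by
    have hws : (w - 1) * S = w ^ k - 1 := by
      rw [← h1, sub_mul, mul_sub, one_mul, mul_one, hcS]
    calc (1 - w) * S = -((w - 1) * S) := by noncomm_ring
      _ = 1 - w ^ k := by rw [hws, neg_sub]
  have h3 : S * (1 - w) = 1 - w ^ k := by
    calc S * (1 - w) = -(S * (w - 1)) := by noncomm_ring
      _ = 1 - w ^ k := by rw [h1, neg_sub]
  have hu : IsUnit (1 - w ^ k) := by simpa using h 1 1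
  exact isUnit_of_commute_mul (h2.trans h3.symm) (h2 ▸ hu)

lemma isUnit_one_add_of_memJ_pow {w : R} {k : ℕ} (hk : 0 < k) (h : memJ (w ^ k)) :
    IsUnit (1 + w) := by
  have hneg : memJ ((-w) ^ k) := by
    intro x y
    have hx : x * (-w) ^ k * y = (x * (-1) ^ k) * w ^ k * y := by
      rw [neg_pow, ← mul_assoc]
    rw [hx]
    exact h _ _
  have := isUnit_one_sub_of_memJ_pow hk hneg
  simpa [sub_neg_eq_add] using this

lemma idem_pow {p : R} (hp : p * p = p) {k : ℕ} (hk : 0 < k) : p ^ k = p := by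
  induction k with
  | zero => omega
  | succ n ih =>
    rcases Nat.eq_zero_or_pos n with h0 | hpos
    · subst h0; simp
    · rw [pow_succ, ih hpos, hp]

theorem stmt18 (a : R) :
    (∃ p : R, ∃ k : ℕ, 0 < k ∧ p * p = p ∧ inComm2 a p ∧ IsUnit (a + p) ∧ memJ (a ^ k * p))
    ↔ ∃ s q : R, IsStrReg s ∧ inComm2 a s ∧ (∃ k : ℕ, 0 < k ∧ memJ (q ^ k)) ∧
        a = s + q ∧ s * q = 0 ∧ q * s = 0 := by
  constructor
  · rintro ⟨p, k, hk, hpp, hpc, hu, hJ⟩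
    have hpa : p * a = a * p := hpc a rfl
    obtain ⟨u, hu_eq⟩ := hu
    have hup : (↑u : R) * p = p * ↑u := by
      rw [hu_eq, add_mul, mul_add, hpp, hpa]
    have huip : (↑u⁻¹ : R) * p = p * ↑u⁻¹ :=
      ((Commute.units_inv_left (hup : Commute (↑u) p)) : Commute (↑u⁻¹ : R) p).eq
    have h1p : (1 - p) * (1 - p) = 1 - p := by
      simp [mul_sub, sub_mul, hpp]
    have hs_eq : a - a * p = ↑u * (1 - p) := by
      rw [hu_eq, add_mul, mul_sub, mul_sub, mul_one, mul_one, hpp]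
      abel
    have hup' : (↑u : R) * (1 - p) = (1 - p) * ↑u := by
      rw [mul_sub, sub_mul, mul_one, one_mul, hup]
    have e1 : (a * p) * a = a * (a * p) := by rw [mul_assoc, hpa]
    have e2 : (a * p) * (a * p) = a * (a * p) := by
      rw [mul_assoc, ← mul_assoc p a p, hpa, mul_assoc, hpp]
    have hsb : (a - a * p) * ((1 - p) * ↑u⁻¹) = 1 - p := by
      calc (a - a * p) * ((1 - p) * ↑u⁻¹)
          = ↑u * ((1 - p) * (1 - p)) * ↑u⁻¹ := by rw [hs_eq]; noncomm_ring
        _ = ↑u * (1 - p) * ↑u⁻¹ := by rw [h1p]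
        _ = (1 - p) * (↑u * ↑u⁻¹) := by rw [hup', mul_assoc]
        _ = 1 - p := by rw [Units.mul_inv, mul_one]
    have hbs : ((1 - p) * ↑u⁻¹) * (a - a * p) = 1 - p := by
      calc ((1 - p) * ↑u⁻¹) * (a - a * p)
          = (1 - p) * (↑u⁻¹ * ↑u) * (1 - p) := by rw [hs_eq]; noncomm_ring
        _ = (1 - p) * (1 - p) := by rw [Units.inv_mul, mul_one]
        _ = 1 - p := h1p
    refine ⟨a - a * p, a * p, ?_, ?_, ⟨k, hk, ?_⟩, ?_, ?_, ?_⟩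
    · -- strongly regular
      refine ⟨(1 - p) * ↑u⁻¹, by rw [hsb, hbs], ?_⟩
      rw [hsb]
      have hppa : p * (a * p) = a * p := by
        rw [← mul_assoc, hpa, mul_assoc, hpp]
      rw [sub_mul, one_mul, mul_sub, hpa, hppa]
      abel
    · -- inComm2
      intro y hy
      have hyp : p * y = y * p := hpc y hy
      calc (a - a * p) * y = a * y - a * (p * y) := by rw [sub_mul, mul_assoc]
        _ = a * y - a * (y * p) := by rw [hyp]
        _ = y * a - (a * y) * p := by rw [hy, mul_assoc]
        _ = y * a - (y * a) * p := by rw [hy]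
        _ = y * (a - a * p) := by rw [mul_sub, mul_assoc]
    · -- memJ ((a*p)^k)
      have hc : Commute a p := hpa.symm
      have : (a * p) ^ k = a ^ k * p := by rw [hc.mul_pow, idem_pow hpp hk]
      rw [this]; exact hJ
    · abel
    · -- s * q = 0
      rw [sub_mul, e2, sub_self]
    · -- q * s = 0
      rw [mul_sub, e1, e2, sub_self]
  · rintro ⟨s, q, ⟨t, hts, hsts⟩, hsc, ⟨k, hk, hJ⟩, haq, hsq, hqs⟩
    have h1 : s * (s * t) = s := by
      rw [hts, ← mul_assoc, ← hsts]
    have h2 : (s * t) * s = s := hsts.symm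
    have he : (s * t) * (s * t) = s * t := by
      rw [← mul_assoc, h2]
    have hqe : q * (s * t) = 0 := by rw [← mul_assoc, hqs, zero_mul]
    have heq : (s * t) * q = 0 := by rw [hts, mul_assoc, hsq, mul_zero]
    refine ⟨1 - s * t, k, hk, ?_, ?_, ?_, ?_⟩
    · simp [mul_sub, sub_mul, he]
    · -- inComm2 a (1 - s*t)
      intro y hy
      have hys : s * y = y * s := hsc y hy
      have key1 : (s * t) * y = t * (y * s) := by
        rw [hts, mul_assoc, hys]
      have key2 : (s * t) * y * (s * t) = (s * t) * y := by
        rw [key1, mul_assoc, mul_assoc, h1]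
      have key3 : (s * t) * (y * (s * t)) = y * (s * t) := by
        calc (s * t) * (y * (s * t)) = (s * t) * ((y * s) * t) := by
              rw [mul_assoc y s t]
          _ = (s * t) * ((s * y) * t) := by rw [hys]
          _ = ((s * t) * s) * (y * t) := by noncomm_ring
          _ = s * (y * t) := by rw [h2]
          _ = (s * y) * t := by rw [mul_assoc]
          _ = y * (s * t) := by rw [hys, mul_assoc]
      have key : (s * t) * y = y * (s * t) := by
        rw [← key3, ← mul_assoc, key2]
      calc (1 - s * t) * y = y - (s * t) * y := by rw [sub_mul, one_mul]
        _ = y - y * (s * t) := by rw [key]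
        _ = y * (1 - s * t) := by rw [mul_sub, mul_one]
    · -- IsUnit (a + (1 - s*t))
      have A : s * (t * (s * t)) = s * t := by
        rw [← mul_assoc]; exact he
      have C : (s * t) * (t * (s * t)) = t * (s * t) := by
        calc (s * t) * (t * (s * t)) = (t * s) * (t * (s * t)) := by rw [hts]
          _ = t * (s * (t * (s * t))) := by rw [mul_assoc]
          _ = t * (s * t) := by rw [A]
      have E : (t * (s * t)) * s = s * t := by
        rw [mul_assoc, h2, ← hts]
      have F : (t * (s * t)) * (s * t) = t * (s * t) := by
        rw [mul_assoc, he]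
      have huv : (s + 1 - s * t) * (t * (s * t) + 1 - s * t) = 1 := by
        simp only [sub_mul, add_mul, mul_sub, mul_add, one_mul, mul_one]
        rw [A, h1, C, he]
        abel
      have hvu : (t * (s * t) + 1 - s * t) * (s + 1 - s * t) = 1 := by
        simp only [sub_mul, add_mul, mul_sub, mul_add, one_mul, mul_one]
        rw [E, F, h2, he]
        abel
      have hu : IsUnit (s + 1 - s * t) := isUnit_iff_exists.mpr ⟨_, huv, hvu⟩
      obtain ⟨U, hU⟩ := hu
      have huq : (s + 1 - s * t) * q = q * (s + 1 - s * t) := by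
        rw [sub_mul, add_mul, mul_sub, mul_add, one_mul, mul_one, hsq, hqs, heq, hqe]
      have hUq : (↑U : R) * q = q * ↑U := by rw [hU]; exact huq
      have hUiq : Commute (↑U⁻¹ : R) q :=
        Commute.units_inv_left (hUq : Commute (↑U : R) q)
      have hwk : memJ (((↑U⁻¹ : R) * q) ^ k) := by
        rw [hUiq.mul_pow]
        exact memJ_mul_left hJ _
      have h1add : IsUnit (1 + (↑U⁻¹ : R) * q) := isUnit_one_add_of_memJ_pow hk hwk
      have hfinal : a + (1 - s * t) = ↑U * (1 + (↑U⁻¹ : R) * q) := by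
        rw [mul_add, mul_one, ← mul_assoc, U.mul_inv, one_mul, hU, haq]
        abel
      rw [hfinal]
      exact U.isUnit.mul h1add
    · -- memJ (a^k * (1 - s*t))
      have hap : a * (1 - s * t) = q := by
        rw [haq, add_mul, mul_sub, mul_sub, mul_one, mul_one, h1, hqe]
        abel
      have hpa : (1 - s * t) * a = q := by
        rw [haq, mul_add, sub_mul, sub_mul, one_mul, one_mul, h2, heq]
        abel
      have hc : Commute a (1 - s * t) := hap.trans hpa.symm
      have hpp : (1 - s * t) * (1 - s * t) = 1 - s * t := by
        simp [mul_sub, sub_mul, he]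
      have : a ^ k * (1 - s * t) = q ^ k := by
        rw [← idem_pow hpp hk, ← hc.mul_pow, hap]
      rw [this]
      exact hJ
end
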